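/- Construction of chained coordinates: on ℝ^{k+1}, let g₀ = ∂/∂z₀ + Σ_{i=1}^{k-1} z_{i+1}∂/∂z_i, g₁ = ∂/∂z_k, and let φ₁(z₀,z₁,z₂) be smooth with ∂φ₁/∂z₂(0) ≠ 0. Then b := L_{g₀}φ₁ = ∂φ₁/∂z₀ + z₂ ∂φ₁/∂z₁ + z₃ ∂φ₁/∂z₂ is an affine function of z₃ with coefficient ∂φ₁/∂z₂, and the map z ↦ (z₀, z₁, φ₁, b, L_{g₀}b, …, L_{g₀}^{k-3}b) has invertible Jacobian at 0, i.e. is a valid local change of coordinates near 0. -/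

import Mathlib

/-- Lie bracket of vector fields on `ι → ℝ`: `[X, Y] = DY·X − DX·Y`. -/
noncomputable def bracket {ι : Type} [Fintype ι] [DecidableEq ι]
    (X Y : (ι → ℝ) → (ι → ℝ)) : (ι → ℝ) → (ι → ℝ) :=
  fun x => fderiv ℝ Y x (X x) - fderiv ℝ X x (Y x)

/-- The C∞(X)-module of vector fields generated by a set `S` of vector fields. -/
inductive SmoothSpan {ι : Type} [Fintype ι] [DecidableEq ι]
    (S : Set ((ι → ℝ) → (ι → ℝ))) : ((ι → ℝ) → (ι → ℝ)) → Prop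
  | of {f : (ι → ℝ) → (ι → ℝ)} (hf : f ∈ S) : SmoothSpan S f
  | zero : SmoothSpan S (fun _ _ => 0)
  | add {f g : (ι → ℝ) → (ι → ℝ)} : SmoothSpan S f → SmoothSpan S g →
      SmoothSpan S (fun x => f x + g x)
  | smul (h : (ι → ℝ) → ℝ) (hh : ContDiff ℝ (⊤ : ℕ∞) h) {f : (ι → ℝ) → (ι → ℝ)} :
      SmoothSpan S f → SmoothSpan S (fun x i => h x * f x i)

/-- The span, over smooth functions, of a set of vector fields. -/
noncomputable def smoothSpan {ι : Type} [Fintype ι] [DecidableEq ι]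
    (S : Set ((ι → ℝ) → (ι → ℝ))) : Set ((ι → ℝ) → (ι → ℝ)) :=
  {f | SmoothSpan S f}

/-- The derived flag: `G⁰ = span S`, `G^{i+1} = G^i + [G^i, G^i]`. -/
noncomputable def derivedFlag {ι : Type} [Fintype ι] [DecidableEq ι]
    (S : Set ((ι → ℝ) → (ι → ℝ))) : ℕ → Set ((ι → ℝ) → (ι → ℝ))
  | 0 => smoothSpan S
  | i+1 => smoothSpan (derivedFlag S i ∪
      {h | ∃ X ∈ derivedFlag S i, ∃ Y ∈ derivedFlag S i, h = bracket X Y})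

/-- The pointwise evaluation of a distribution: the subspace of `ι → ℝ` spanned
by the values at `x` of the vector fields in `D`. -/
noncomputable def ptSpan {ι : Type} [Fintype ι] [DecidableEq ι]
    (D : Set ((ι → ℝ) → (ι → ℝ))) (x : ι → ℝ) : Submodule ℝ (ι → ℝ) :=
  Submodule.span ℝ {v | ∃ f ∈ D, f x = v}

/-- The characteristic distribution `C = {c ∈ D : [c, D] ⊆ D}`. -/
noncomputable def charDist {ι : Type} [Fintype ι] [DecidableEq ι]
    (D : Set ((ι → ℝ) → (ι → ℝ))) : Set ((ι → ℝ) → (ι → ℝ)) :=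
  {c | c ∈ D ∧ ∀ f ∈ D, bracket c f ∈ D}

/-- `g₀ = ∂/∂z₀ + Σ_{i=1}^{k-1} z_{i+1} ∂/∂z_i` on `ℝ^{k+1}`. -/
noncomputable def g0 (k : ℕ) : (Fin (k+1) → ℝ) → (Fin (k+1) → ℝ) :=
  fun x i => if i.val = 0 then 1 else if h : i.val < k then x ⟨i.val + 1, by omega⟩ else 0

/-- `g₁ = ∂/∂z_k` on `ℝ^{k+1}`. -/
noncomputable def g1 (k : ℕ) : (Fin (k+1) → ℝ) → (Fin (k+1) → ℝ) :=
  fun _ i => if i.val = k then 1 else 0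

/-- The coordinate vector field `∂/∂z_j` on `ℝ^{k+1}`. -/
noncomputable def eN (k j : ℕ) : (Fin (k+1) → ℝ) → (Fin (k+1) → ℝ) :=
  fun _ i => if i.val = j then 1 else 0

/-- The Lie derivative of a function along `g₀`. -/
noncomputable def LieG0 (k : ℕ) (h : (Fin (k+1) → ℝ) → ℝ) : (Fin (k+1) → ℝ) → ℝ :=
  fun x => fderiv ℝ h x (g0 k x)

/-- The candidate coordinate chart `z ↦ (z₀, z₁, φ₁, b, L_{g₀}b, …, L_{g₀}^{k-3}b)`,
where `b = L_{g₀}φ₁`. -/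
noncomputable def chainedChart (k : ℕ) (φ₁ : (Fin (k+1) → ℝ) → ℝ) :
    (Fin (k+1) → ℝ) → (Fin (k+1) → ℝ) :=
  fun x i =>
    if i.val = 0 then x ⟨0, Nat.succ_pos k⟩
    else if h : i.val = 1 then x ⟨1, by omega⟩
    else (LieG0 k)^[i.val - 2] φ₁ x


section Aux

/-- Projection onto the first `m+1` coordinates. -/
noncomputable def Pj (k m : ℕ) : (Fin (k+1) → ℝ) →L[ℝ] (Fin (k+1) → ℝ) :=
  ContinuousLinearMap.pi (fun i => if i.val ≤ m then ContinuousLinearMap.proj i else 0)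

lemma Pj_apply (k m : ℕ) (x : Fin (k+1) → ℝ) (i : Fin (k+1)) :
    Pj k m x i = if i.val ≤ m then x i else 0 := by
  simp only [Pj, ContinuousLinearMap.pi_apply]
  split_ifs <;> simp

/-- The `m`-th coordinate vector. -/
noncomputable def ee (k m : ℕ) : Fin (k+1) → ℝ := fun i => if i.val = m then 1 else 0

lemma ee_apply (k m : ℕ) (i : Fin (k+1)) : ee k m i = if i.val = m then 1 else 0 := rfl

lemma single_eq_ee (k m : ℕ) (h : m < k + 1) :
    (Pi.single (⟨m, h⟩ : Fin (k+1)) (1:ℝ)) = ee k m := by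
  funext i
  rw [Pi.single_apply, ee]
  simp [Fin.ext_iff]

lemma g0_smooth (k : ℕ) : ContDiff ℝ (⊤ : ℕ∞) (g0 k) := by
  rw [contDiff_pi]
  intro i
  unfold g0
  by_cases h0 : i.val = 0
  · simp only [h0, if_true]; exact contDiff_const
  · simp only [h0, if_false]
    by_cases hk : i.val < k
    · simp only [dif_pos hk]
      exact contDiff_pi.mp contDiff_id (⟨i.val + 1, by omega⟩ : Fin (k+1))
    · simp only [dif_neg hk]; exact contDiff_const

lemma lie_smooth (k : ℕ) {h : (Fin (k+1) → ℝ) → ℝ} (hh : ContDiff ℝ (⊤ : ℕ∞) h) :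
    ContDiff ℝ (⊤ : ℕ∞) (LieG0 k h) :=
  (hh.fderiv_right (by simp)).clm_apply (g0_smooth k)

lemma psi_smooth (k : ℕ) {φ : (Fin (k+1) → ℝ) → ℝ} (hφ : ContDiff ℝ (⊤ : ℕ∞) φ) (j : ℕ) :
    ContDiff ℝ (⊤ : ℕ∞) ((LieG0 k)^[j] φ) := by
  induction j with
  | zero => exact hφ
  | succ j ih => rw [Function.iterate_succ_apply']; exact lie_smooth k ih

lemma fderiv_Pj {k m : ℕ} {f : (Fin (k+1) → ℝ) → ℝ} (hf : ContDiff ℝ (⊤ : ℕ∞) f)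
    (hP : ∀ y, f (Pj k m y) = f y) (x v : Fin (k+1) → ℝ) :
    fderiv ℝ f x v = fderiv ℝ f (Pj k m x) (Pj k m v) := by
  have hfe : f = f ∘ (Pj k m) := funext fun y => (hP y).symm
  conv_lhs => rw [hfe]
  rw [fderiv_comp x (hf.differentiable (by simp) _)
    (Pj k m).differentiableAt, (Pj k m).fderiv]
  rfl

lemma Pj_Pj (k : ℕ) {m m' : ℕ} (h : m ≤ m') (x : Fin (k+1) → ℝ) :
    Pj k m (Pj k m' x) = Pj k m x := by
  funext i
  simp only [Pj_apply]
  split_ifs <;> first | rfl | omega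

lemma Pj_g0 (k m : ℕ) (x : Fin (k+1) → ℝ) :
    Pj k m (g0 k x) = Pj k m (g0 k (Pj k (m+1) x)) := by
  funext i
  simp only [Pj_apply]
  by_cases hi : i.val ≤ m
  · simp only [hi, if_true]
    unfold g0
    by_cases h0 : i.val = 0
    · simp [h0]
    · simp only [h0, if_false]
      by_cases hk : i.val < k
      · simp only [hk, dif_pos, Pj_apply]
        rw [if_pos (by omega)]
      · simp [hk]
  · simp [hi]

lemma psi_dep (k : ℕ) {φ : (Fin (k+1) → ℝ) → ℝ} (hφ : ContDiff ℝ (⊤ : ℕ∞) φ)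
    (hdep : ∀ x y : Fin (k+1) → ℝ, (∀ i : Fin (k+1), i.val ≤ 2 → x i = y i) → φ x = φ y)
    (j : ℕ) (x : Fin (k+1) → ℝ) :
    (LieG0 k)^[j] φ (Pj k (j+2) x) = (LieG0 k)^[j] φ x := by
  induction j generalizing x with
  | zero =>
    exact hdep _ _ (fun i hi => by rw [Pj_apply, if_pos hi])
  | succ j ih =>
    rw [Function.iterate_succ_apply']
    show fderiv ℝ ((LieG0 k)^[j] φ) (Pj k (j+3) x) (g0 k (Pj k (j+3) x))
      = fderiv ℝ ((LieG0 k)^[j] φ) x (g0 k x)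
    rw [fderiv_Pj (psi_smooth k hφ j) ih (Pj k (j+3) x) _,
      fderiv_Pj (psi_smooth k hφ j) ih x (g0 k x),
      Pj_Pj k (by omega : j+2 ≤ j+3) x, ← Pj_g0 k (j+2) x]

lemma psi_fderiv_zero (k : ℕ) {φ : (Fin (k+1) → ℝ) → ℝ} (hφ : ContDiff ℝ (⊤ : ℕ∞) φ)
    (hdep : ∀ x y : Fin (k+1) → ℝ, (∀ i : Fin (k+1), i.val ≤ 2 → x i = y i) → φ x = φ y)
    (j n : ℕ) (hn : j + 2 < n) :
    fderiv ℝ ((LieG0 k)^[j] φ) 0 (ee k n) = 0 := by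
  rw [fderiv_Pj (psi_smooth k hφ j) (psi_dep k hφ hdep j) 0 (ee k n)]
  have h1 : Pj k (j+2) (ee k n) = 0 := by
    funext i
    rw [Pj_apply]
    split_ifs with h
    · rw [ee_apply, if_neg (by omega)]; simp
    · simp
  rw [h1, map_zero]

lemma psi_fderiv_diag (k : ℕ) {φ : (Fin (k+1) → ℝ) → ℝ} (hφ : ContDiff ℝ (⊤ : ℕ∞) φ)
    (hdep : ∀ x y : Fin (k+1) → ℝ, (∀ i : Fin (k+1), i.val ≤ 2 → x i = y i) → φ x = φ y)
    (j : ℕ) (hj : j + 2 ≤ k) :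
    fderiv ℝ ((LieG0 k)^[j] φ) 0 (ee k (j+2)) = fderiv ℝ φ 0 (ee k 2) := by
  induction j with
  | zero => rfl
  | succ j ih =>
    have hj' : j + 2 ≤ k := by omega
    have hj3 : j + 3 ≤ k := by omega
    set ψ := (LieG0 k)^[j] φ with hψ
    have key : ∀ t : ℝ, (LieG0 k)^[j+1] φ (t • ee k (j+3)) =
        fderiv ℝ ψ 0 (ee k 0) + t * fderiv ℝ ψ 0 (ee k (j+2)) := by
      intro t
      rw [Function.iterate_succ_apply']
      show fderiv ℝ ψ (t • ee k (j+3)) (g0 k (t • ee k (j+3))) = _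
      rw [fderiv_Pj (psi_smooth k hφ j) (psi_dep k hφ hdep j)]
      have h1 : Pj k (j+2) (t • ee k (j+3)) = 0 := by
        funext i
        rw [Pj_apply]
        split_ifs with h
        · show t * ee k (j+3) i = 0
          rw [ee_apply, if_neg (by omega), mul_zero]
        · rfl
      have h2 : Pj k (j+2) (g0 k (t • ee k (j+3))) = ee k 0 + t • ee k (j+2) := by
        funext i
        rw [Pj_apply]
        show _ = ee k 0 i + t * ee k (j+2) i
        by_cases hi : i.val ≤ j + 2
        · rw [if_pos hi]
          unfold g0
          by_cases h0 : i.val = 0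
          · rw [if_pos h0, ee_apply, ee_apply, if_pos h0,
              if_neg (show ¬ i.val = j+2 by omega), mul_zero, add_zero]
          · rw [if_neg h0, dif_pos (show i.val < k by omega)]
            show t * ee k (j+3) ⟨i.val + 1, by omega⟩ = _
            simp only [ee_apply]
            rw [if_neg h0]
            by_cases hij : i.val = j + 2
            · rw [if_pos (show ((⟨i.val + 1, by omega⟩ : Fin (k+1))).val = j + 3 from
                show i.val + 1 = j + 3 by omega), if_pos hij]
              ring
            · rw [if_neg (show ¬ ((⟨i.val + 1, by omega⟩ : Fin (k+1))).val = j + 3 from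
                show ¬ i.val + 1 = j + 3 by omega), if_neg hij]
              ring
        · rw [if_neg hi, ee_apply, ee_apply, if_neg (show ¬ i.val = 0 by omega),
            if_neg (show ¬ i.val = j+2 by omega), mul_zero, add_zero]
      rw [h1, h2, map_add, map_smul, smul_eq_mul]
    have hc : HasDerivAt (fun t : ℝ => t • ee k (j+3)) (ee k (j+3)) 0 := by
      simpa using (hasDerivAt_id (0:ℝ)).smul_const (ee k (j+3))
    have hF : HasDerivAt (fun t : ℝ => (LieG0 k)^[j+1] φ (t • ee k (j+3)))
        (fderiv ℝ ((LieG0 k)^[j+1] φ) 0 (ee k (j+3))) 0 := by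
      have hfd := ((psi_smooth k hφ (j+1)).differentiable (by simp)
        ((0:ℝ) • ee k (j+3))).hasFDerivAt
      have := hfd.comp_hasDerivAt 0 hc
      simpa [Function.comp_def] using this
    have hG : HasDerivAt (fun t : ℝ => fderiv ℝ ψ 0 (ee k 0) + t * fderiv ℝ ψ 0 (ee k (j+2)))
        (fderiv ℝ ψ 0 (ee k (j+2))) 0 :=
      (hasDerivAt_mul_const _).const_add _
    have heq : (fun t : ℝ => (LieG0 k)^[j+1] φ (t • ee k (j+3))) =
        (fun t : ℝ => fderiv ℝ ψ 0 (ee k 0) + t * fderiv ℝ ψ 0 (ee k (j+2))) := funext key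
    rw [heq] at hF
    have huniq := hF.unique hG
    show fderiv ℝ ((LieG0 k)^[j+1] φ) 0 (ee k (j+3)) = _
    rw [huniq, ih hj']

end Aux


/-- On `ℝ^{k+1}` with `g₀ = ∂/∂z₀ + Σ z_{i+1}∂/∂z_i`, let
`φ₁(z₀,z₁,z₂)` be smooth with `∂φ₁/∂z₂(0) ≠ 0`. Then `b := L_{g₀}φ₁ =
∂φ₁/∂z₀ + z₂∂φ₁/∂z₁ + z₃∂φ₁/∂z₂` is affine in `z₃` with coefficient `∂φ₁/∂z₂`,
and `z ↦ (z₀, z₁, φ₁, b, L_{g₀}b, …, L_{g₀}^{k-3}b)` has invertible Jacobian at `0`,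
i.e. is a valid local change of coordinates near `0`. -/
theorem chained_coordinates_construction (k : ℕ) (hk : 3 ≤ k)
    (φ₁ : (Fin (k+1) → ℝ) → ℝ) (hφ₁ : ContDiff ℝ (⊤ : ℕ∞) φ₁)
    (hdep : ∀ x y : Fin (k+1) → ℝ,
      x ⟨0, by omega⟩ = y ⟨0, by omega⟩ → x ⟨1, by omega⟩ = y ⟨1, by omega⟩ →
      x ⟨2, by omega⟩ = y ⟨2, by omega⟩ → φ₁ x = φ₁ y)
    (hnz : fderiv ℝ φ₁ 0 (Pi.single (⟨2, by omega⟩ : Fin (k+1)) 1) ≠ 0) :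
    -- `b = L_{g₀}φ₁` is the stated affine function of `z₃`
    (∀ x : Fin (k+1) → ℝ,
      LieG0 k φ₁ x =
        fderiv ℝ φ₁ x (Pi.single (⟨0, by omega⟩ : Fin (k+1)) 1)
        + x ⟨2, by omega⟩ * fderiv ℝ φ₁ x (Pi.single (⟨1, by omega⟩ : Fin (k+1)) 1)
        + x ⟨3, by omega⟩ * fderiv ℝ φ₁ x (Pi.single (⟨2, by omega⟩ : Fin (k+1)) 1)) ∧
    (∀ (x : Fin (k+1) → ℝ) (t : ℝ),
      LieG0 k φ₁ (Function.update x (⟨3, by omega⟩ : Fin (k+1)) t)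
        = LieG0 k φ₁ (Function.update x (⟨3, by omega⟩ : Fin (k+1)) 0)
          + t * fderiv ℝ φ₁ x (Pi.single (⟨2, by omega⟩ : Fin (k+1)) 1)) ∧
    -- the Jacobian of the chart is invertible at 0
    Function.Bijective (fderiv ℝ (chainedChart k φ₁) 0) := by
  have hdep' : ∀ x y : Fin (k+1) → ℝ,
      (∀ i : Fin (k+1), i.val ≤ 2 → x i = y i) → φ₁ x = φ₁ y := by
    intro x y h
    exact hdep x y (h _ (by norm_num)) (h _ (by norm_num)) (h _ (by norm_num))
  have hPdep : ∀ y, φ₁ (Pj k 2 y) = φ₁ y := fun y =>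
    hdep' _ _ (fun i hi => by rw [Pj_apply, if_pos hi])
  have hfd_pt : ∀ x v, fderiv ℝ φ₁ x v = fderiv ℝ φ₁ (Pj k 2 x) (Pj k 2 v) :=
    fderiv_Pj hφ₁ hPdep
  have hee : ∀ (x : Fin (k+1) → ℝ) (m : ℕ), m ≤ 2 →
      fderiv ℝ φ₁ (Pj k 2 x) (ee k m) = fderiv ℝ φ₁ x (ee k m) := by
    intro x m hm
    rw [hfd_pt x (ee k m)]
    congr 1
    funext i
    rw [Pj_apply]
    split_ifs with h
    · rfl
    · rw [ee_apply, if_neg (by omega)]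
  have part1 : ∀ x : Fin (k+1) → ℝ,
      LieG0 k φ₁ x =
        fderiv ℝ φ₁ x (Pi.single (⟨0, by omega⟩ : Fin (k+1)) 1)
        + x ⟨2, by omega⟩ * fderiv ℝ φ₁ x (Pi.single (⟨1, by omega⟩ : Fin (k+1)) 1)
        + x ⟨3, by omega⟩ * fderiv ℝ φ₁ x (Pi.single (⟨2, by omega⟩ : Fin (k+1)) 1) := by
    intro x
    rw [single_eq_ee k 0 (by omega), single_eq_ee k 1 (by omega), single_eq_ee k 2 (by omega)]
    show fderiv ℝ φ₁ x (g0 k x) = _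
    rw [hfd_pt x (g0 k x)]
    have hg : Pj k 2 (g0 k x) =
        ee k 0 + x ⟨2, by omega⟩ • ee k 1 + x ⟨3, by omega⟩ • ee k 2 := by
      funext i
      rw [Pj_apply]
      show _ = ee k 0 i + x ⟨2, by omega⟩ * ee k 1 i + x ⟨3, by omega⟩ * ee k 2 i
      simp only [ee_apply]
      by_cases hi : i.val ≤ 2
      · rw [if_pos hi]
        unfold g0
        by_cases h0 : i.val = 0
        · rw [if_pos h0, if_pos h0, if_neg (by omega), if_neg (by omega)]; ring
        · rw [if_neg h0, dif_pos (show i.val < k by omega)]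
          by_cases h1 : i.val = 1
          · rw [show (⟨i.val + 1, by omega⟩ : Fin (k+1)) = ⟨2, by omega⟩ from
                by simp [Fin.ext_iff]; omega,
              if_neg h0, if_pos h1, if_neg (by omega)]
            ring
          · have h2 : i.val = 2 := by omega
            rw [show (⟨i.val + 1, by omega⟩ : Fin (k+1)) = ⟨3, by omega⟩ from
                by simp [Fin.ext_iff]; omega,
              if_neg h0, if_neg h1, if_pos h2]
            ring
      · rw [if_neg hi, if_neg (by omega), if_neg (by omega), if_neg (by omega)]; ring
    rw [hg, map_add, map_add, map_smul, map_smul, smul_eq_mul, smul_eq_mul,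
      hee x 0 (by omega), hee x 1 (by omega), hee x 2 (by omega)]
  refine ⟨part1, ?_, ?_⟩
  · -- part 2
    intro x t
    rw [part1 (Function.update x (⟨3, by omega⟩ : Fin (k+1)) t),
      part1 (Function.update x (⟨3, by omega⟩ : Fin (k+1)) 0)]
    have hfd_upd : ∀ (s : ℝ) (v : Fin (k+1) → ℝ),
        fderiv ℝ φ₁ (Function.update x (⟨3, by omega⟩ : Fin (k+1)) s) v
          = fderiv ℝ φ₁ x v := by
      intro s v
      rw [hfd_pt _ v, hfd_pt x v]
      have hP : Pj k 2 (Function.update x (⟨3, by omega⟩ : Fin (k+1)) s) = Pj k 2 x := by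
        funext i
        rw [Pj_apply, Pj_apply]
        split_ifs with h
        · exact Function.update_of_ne (by simp [Fin.ext_iff]; omega) _ _
        · rfl
      rw [hP]
    have hu2 : ∀ s : ℝ, Function.update x (⟨3, by omega⟩ : Fin (k+1)) s ⟨2, by omega⟩
        = x ⟨2, by omega⟩ := fun s =>
      Function.update_of_ne (by simp [Fin.ext_iff]) _ _
    have hu3 : ∀ s : ℝ, Function.update x (⟨3, by omega⟩ : Fin (k+1)) s ⟨3, by omega⟩
        = s := fun s => Function.update_self _ _ _
    simp only [hfd_upd, hu2, hu3]
    ring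
  · -- part 3 : bijectivity
    have hnz' : fderiv ℝ φ₁ 0 (ee k 2) ≠ 0 := by
      rw [← single_eq_ee k 2 (by omega)]; exact hnz
    have hchart0 : ∀ i : Fin (k+1), i.val = 0 →
        (fun x => chainedChart k φ₁ x i) = (fun x : Fin (k+1) → ℝ => x ⟨0, Nat.succ_pos k⟩) := by
      intro i h0; funext x; simp [chainedChart, h0]
    have hchart1 : ∀ i : Fin (k+1), i.val = 1 →
        (fun x => chainedChart k φ₁ x i) = (fun x : Fin (k+1) → ℝ => x ⟨1, by omega⟩) := by
      intro i h1; funext x; simp [chainedChart, h1]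
    have hchartψ : ∀ i : Fin (k+1), ¬ i.val = 0 → ¬ i.val = 1 →
        (fun x => chainedChart k φ₁ x i) = (LieG0 k)^[i.val - 2] φ₁ := by
      intro i h0 h1; funext x; simp [chainedChart, h0, h1]
    have hev : ∀ c : Fin (k+1), ContDiff ℝ (⊤ : ℕ∞) (fun x : Fin (k+1) → ℝ => x c) := fun c =>
      contDiff_pi.mp contDiff_id c
    have hev_fd : ∀ (c : Fin (k+1)) (v : Fin (k+1) → ℝ),
        fderiv ℝ (fun x : Fin (k+1) → ℝ => x c) 0 v = v c := by
      intro c v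
      rw [show (fun x : Fin (k+1) → ℝ => x c)
          = ⇑(ContinuousLinearMap.proj c : (Fin (k+1) → ℝ) →L[ℝ] ℝ) from rfl,
        ContinuousLinearMap.fderiv]
      rfl
    have hdiffc : ∀ i : Fin (k+1), DifferentiableAt ℝ (fun x => chainedChart k φ₁ x i) 0 := by
      intro i
      by_cases h0 : i.val = 0
      · rw [hchart0 i h0]; exact ((hev _).differentiable (by simp) _)
      · by_cases h1 : i.val = 1
        · rw [hchart1 i h1]; exact ((hev _).differentiable (by simp) _)
        · rw [hchartψ i h0 h1]
          exact ((psi_smooth k hφ₁ _).differentiable (by simp) _)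
    set A := fderiv ℝ (chainedChart k φ₁) 0 with hAdef
    have hA : A = ContinuousLinearMap.pi
        (fun i => fderiv ℝ (fun x => chainedChart k φ₁ x i) 0) := fderiv_pi hdiffc
    set M : Matrix (Fin (k+1)) (Fin (k+1)) ℝ :=
      LinearMap.toMatrix' (A : (Fin (k+1) → ℝ) →ₗ[ℝ] (Fin (k+1) → ℝ)) with hM
    have hMe : ∀ i j : Fin (k+1),
        M i j = fderiv ℝ (fun x => chainedChart k φ₁ x i) 0 (ee k j.val) := by
      intro i j
      rw [hM, LinearMap.toMatrix'_apply]
      rw [show (Pi.single j (1:ℝ) : Fin (k+1) → ℝ) = ee k j.val from by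
        funext i'; rw [ee_apply, Pi.single_apply]; simp [Fin.ext_iff]]
      show A (ee k j.val) i = _
      rw [hA, ContinuousLinearMap.pi_apply]
    have hzero : ∀ i j : Fin (k+1), i < j → M i j = 0 := by
      intro i j hij
      have hv : i.val < j.val := hij
      rw [hMe]
      by_cases h0 : i.val = 0
      · rw [hchart0 i h0, hev_fd, ee_apply, if_neg (show ¬ (0 = j.val) by omega)]
      · by_cases h1 : i.val = 1
        · rw [hchart1 i h1, hev_fd, ee_apply, if_neg (show ¬ (1 = j.val) by omega)]
        · rw [hchartψ i h0 h1]
          exact psi_fderiv_zero k hφ₁ hdep' (i.val - 2) j.val (by omega)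
    have hdiag : ∀ i : Fin (k+1), M i i = if i.val ≤ 1 then 1
        else fderiv ℝ φ₁ 0 (ee k 2) := by
      intro i
      rw [hMe]
      by_cases h0 : i.val = 0
      · rw [hchart0 i h0, hev_fd, ee_apply, if_pos (show (0:ℕ) = i.val by omega),
          if_pos (by omega)]
      · by_cases h1 : i.val = 1
        · rw [hchart1 i h1, hev_fd, ee_apply, if_pos (show (1:ℕ) = i.val by omega),
            if_pos (by omega)]
        · have hd := psi_fderiv_diag k hφ₁ hdep' (i.val - 2)
            (by have := i.isLt; omega : i.val - 2 + 2 ≤ k)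
          rw [show i.val - 2 + 2 = i.val from by omega] at hd
          rw [hchartψ i h0 h1, hd, if_neg (by omega)]
    have hM_tri : M.BlockTriangular OrderDual.toDual := by
      intro i j h
      exact hzero i j h
    have hdet_ne : M.det ≠ 0 := by
      rw [Matrix.det_of_lowerTriangular M hM_tri, Finset.prod_ne_zero_iff]
      intro i _
      rw [hdiag]
      split_ifs
      · exact one_ne_zero
      · exact hnz'
    have hunit : IsUnit M.det := isUnit_iff_ne_zero.mpr hdet_ne
    have hAv : ∀ v, A v = M.mulVec v := by
      intro v
      have h1 : Matrix.toLin' M = (A : (Fin (k+1) → ℝ) →ₗ[ℝ] (Fin (k+1) → ℝ)) := by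
        rw [hM]; exact Matrix.toLin'_toMatrix' _
      calc A v = (Matrix.toLin' M) v := by rw [h1]; rfl
        _ = M.mulVec v := Matrix.toLin'_apply M v
    refine Function.bijective_iff_has_inverse.mpr ⟨fun v => M⁻¹.mulVec v, ?_, ?_⟩
    · intro v
      show M⁻¹.mulVec (A v) = v
      rw [hAv, Matrix.mulVec_mulVec, Matrix.nonsing_inv_mul M hunit, Matrix.one_mulVec]
    · intro v
      show A (M⁻¹.mulVec v) = v
      rw [hAv, Matrix.mulVec_mulVec, Matrix.mul_nonsing_inv M hunit, Matrix.one_mulVec]
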